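/- The partial derivative of the edge element E with respect to the indeterminate A₁″ is given by ∂E/∂A₁″ = (1/5)·L^{−2}·(−1)^{b₁+b₂}·Σ_{m=0}^{2} (−1)^m·ζ^{−(b₁+m+2)·p₁ − (b₂−m+4)·p₂}·P_{4,p₁}^{b₁+m−2}·P_{4,p₂}^{b₂−m}. -/

import Mathlib

open MvPolynomial

/-- The ring `F = ℂ[L, L⁻¹][A₁, A₁′, A₁″, A₂]`, modelled as polynomials in four variables
(`A₁ = X 0`, `A₁′ = X 1`, `A₁″ = X 2`, `A₂ = X 3`) over the ring of Laurent polynomials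
`ℂ[L, L⁻¹]` (with `L = T 1`). -/
noncomputable abbrev F : Type := MvPolynomial (Fin 4) (LaurentPolynomial ℂ)

/-- The element `L ∈ F`. -/
noncomputable def Lv : F := MvPolynomial.C (LaurentPolynomial.T 1)

/-- The element `L⁻¹ ∈ F`. -/
noncomputable def Lvinv : F := MvPolynomial.C (LaurentPolynomial.T (-1))

/-- The indeterminate `A₁`. -/
noncomputable def A1 : F := MvPolynomial.X 0

/-- The indeterminate `A₁′`. -/
noncomputable def A1' : F := MvPolynomial.X 1

/-- The indeterminate `A₁″`. -/
noncomputable def A1'' : F := MvPolynomial.X 2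

/-- The indeterminate `A₂`. -/
noncomputable def A2 : F := MvPolynomial.X 3

/-- `ζ = e^{2πi/5} ∈ ℂ`. -/
noncomputable def ζ : ℂ := Complex.exp (2 * Real.pi * Complex.I / 5)

/-- The involution `InvFive` on `{0,…,4}` with `InvFive 0 = 0`, `Inv r = 5 − r`, i.e. negation in
`Fin 5`. -/
def InvFive (r : Fin 5) : Fin 5 := -r

/-- The edge element
`E = (1/5)·(−1)^{b₁+b₂}·Σ_{m=0}^{b₂} (−1)^m Σ_{r=0}^{4}
  ζ^{−(b₁+m+1+InvFive r)·p₁ − (b₂−m+r)·p₂} · P_{InvFive r, p₁}^{b₁+m+1} · P_{r, p₂}^{b₂−m}`. -/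
noncomputable def edgeE (P : Fin 5 → Fin 5 → ℤ → F) (p₁ p₂ : Fin 5) (b₁ b₂ : ℕ) : F :=
  ∑ m ∈ Finset.range (b₂ + 1), ∑ r : Fin 5,
    ((1 / 5 : ℂ) * (-1 : ℂ) ^ (b₁ + b₂) * (-1 : ℂ) ^ m *
        ζ ^ (-(((b₁ : ℤ) + (m : ℤ) + 1 + ((InvFive r : ℕ) : ℤ)) * ((p₁ : ℕ) : ℤ))
            - ((b₂ : ℤ) - (m : ℤ) + ((r : ℕ) : ℤ)) * ((p₂ : ℕ) : ℤ))) •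
      (P (InvFive r) p₁ ((b₁ : ℤ) + (m : ℤ) + 1) * P r p₂ ((b₂ : ℤ) - (m : ℤ)))


/-! ### Auxiliary lemmas -/

/-- The predicate of being a "constant", i.e. in the image of `MvPolynomial.C`. -/
def IsConstF (x : F) : Prop := ∃ g, x = MvPolynomial.C g

lemma IsConstF.add {x y : F} (hx : IsConstF x) (hy : IsConstF y) : IsConstF (x + y) := by
  obtain ⟨g, rfl⟩ := hx; obtain ⟨h, rfl⟩ := hy; exact ⟨g + h, (map_add _ _ _).symm⟩

lemma IsConstF.mul {x y : F} (hx : IsConstF x) (hy : IsConstF y) : IsConstF (x * y) := by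
  obtain ⟨g, rfl⟩ := hx; obtain ⟨h, rfl⟩ := hy; exact ⟨g * h, (map_mul _ _ _).symm⟩

lemma IsConstF.neg {x : F} (hx : IsConstF x) : IsConstF (-x) := by
  obtain ⟨g, rfl⟩ := hx; exact ⟨-g, (map_neg _ _).symm⟩

lemma IsConstF.sub {x y : F} (hx : IsConstF x) (hy : IsConstF y) : IsConstF (x - y) := by
  obtain ⟨g, rfl⟩ := hx; obtain ⟨h, rfl⟩ := hy; exact ⟨g - h, (map_sub _ _ _).symm⟩

lemma IsConstF.pow {x : F} (hx : IsConstF x) (n : ℕ) : IsConstF (x ^ n) := by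
  obtain ⟨g, rfl⟩ := hx; exact ⟨g ^ n, (map_pow _ _ _).symm⟩

lemma smul_CF (a : ℂ) (x : LaurentPolynomial ℂ) :
    a • (MvPolynomial.C x : F) = MvPolynomial.C (a • x) := by
  rw [Algebra.smul_def, Algebra.smul_def, map_mul]; rfl

lemma IsConstF.smul {x : F} (a : ℂ) (hx : IsConstF x) : IsConstF (a • x) := by
  obtain ⟨g, rfl⟩ := hx; exact ⟨a • g, smul_CF a g⟩

lemma isConstF_C (g : LaurentPolynomial ℂ) : IsConstF (MvPolynomial.C g) := ⟨g, rfl⟩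

lemma D_algebraMapF (D : Derivation ℂ F F) (a : ℂ) :
    D (MvPolynomial.C (LaurentPolynomial.C a)) = 0 := by
  have : (MvPolynomial.C (LaurentPolynomial.C a) : F) = algebraMap ℂ F a := rfl
  rw [this, Derivation.map_algebraMap]

/-- The derivation `D` maps constants to constants. -/
lemma isConstF_D (D : Derivation ℂ F F)
    (hDL : D Lv = Lv - (5 ^ 5 : ℂ)⁻¹ • Lv ^ 6) :
    ∀ {x : F}, IsConstF x → IsConstF (D x) := by
  have hDLc : IsConstF (D Lv) := by
    rw [hDL]
    exact (isConstF_C _).sub (((isConstF_C _).pow 6).smul _)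
  have hneg1 : IsConstF (D (MvPolynomial.C (LaurentPolynomial.T (-1)))) := by
    have h0 : (MvPolynomial.C (LaurentPolynomial.T (-1)) : F)
        * MvPolynomial.C (LaurentPolynomial.T 1) = 1 := by
      rw [← map_mul, ← LaurentPolynomial.T_add]; norm_num
    have h1 : D ((MvPolynomial.C (LaurentPolynomial.T (-1)) : F)
        * MvPolynomial.C (LaurentPolynomial.T 1)) = 0 := by
      rw [h0]; exact D.map_one_eq_zero
    rw [D.leibniz, smul_eq_mul, smul_eq_mul] at h1
    have key : D (MvPolynomial.C (LaurentPolynomial.T (-1)) : F) =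
        -(MvPolynomial.C (LaurentPolynomial.T (-1)) *
          (MvPolynomial.C (LaurentPolynomial.T (-1)) * D Lv)) := by
      have : D (MvPolynomial.C (LaurentPolynomial.T 1) : F) = D Lv := rfl
      rw [this] at h1
      linear_combination (MvPolynomial.C (LaurentPolynomial.T (-1)) : F) * h1
        - D (MvPolynomial.C (LaurentPolynomial.T (-1)) : F) * h0
    rw [key]
    exact (((isConstF_C _).mul ((isConstF_C _).mul hDLc)).neg)
  have hT : ∀ n : ℤ, IsConstF (D (MvPolynomial.C (LaurentPolynomial.T n))) := by
    intro n
    induction n using Int.induction_on with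
    | zero => rw [LaurentPolynomial.T_zero, map_one, D.map_one_eq_zero]; exact ⟨0, by simp⟩
    | succ n ih =>
        rw [LaurentPolynomial.T_add, map_mul, D.leibniz, smul_eq_mul, smul_eq_mul]
        exact ((isConstF_C _).mul hDLc).add ((isConstF_C _).mul ih)
    | pred n ih =>
        rw [show (-(n : ℤ) - 1) = (-(n : ℤ)) + (-1) from by ring, LaurentPolynomial.T_add,
          map_mul, D.leibniz, smul_eq_mul, smul_eq_mul]
        exact ((isConstF_C _).mul hneg1).add ((isConstF_C _).mul ih)
  rintro x ⟨f, rfl⟩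
  induction f using LaurentPolynomial.induction_on' with
  | add p q hp hq => rw [map_add, map_add]; exact hp.add hq
  | C_mul_T n a =>
      rw [map_mul, D.leibniz, smul_eq_mul, smul_eq_mul, D_algebraMapF]
      exact ((isConstF_C _).mul (hT n)).add ((isConstF_C _).mul ⟨0, by simp⟩)

/-- A telescoping identity. -/
lemma telescope3 (g : ℕ → F) (n : ℕ) (h : ∀ m, n ≤ m → g m = 0) :
    ∑ m ∈ Finset.range n, (g m - g (m + 3)) = ∑ m ∈ Finset.range 3, g m := by
  rw [Finset.sum_sub_distrib]
  have h1 : ∑ m ∈ Finset.range n, g (m + 3) = ∑ m ∈ Finset.Ico 3 (n + 3), g m := by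
    rw [Finset.sum_Ico_eq_sum_range]
    simp [add_comm]
  have h2 : ∑ m ∈ Finset.range n, g m + ∑ m ∈ Finset.Ico n (n + 3), g m
      = ∑ m ∈ Finset.range (n + 3), g m := by
    simp only [Finset.range_eq_Ico]
    exact Finset.sum_Ico_consecutive _ (Nat.zero_le n) (by omega)
  have h3 : ∑ m ∈ Finset.range 3, g m + ∑ m ∈ Finset.Ico 3 (n + 3), g m
      = ∑ m ∈ Finset.range (n + 3), g m := by
    simp only [Finset.range_eq_Ico]
    exact Finset.sum_Ico_consecutive _ (Nat.zero_le 3) (by omega)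
  have h4 : ∑ m ∈ Finset.Ico n (n + 3), g m = 0 :=
    Finset.sum_eq_zero fun m hm => h m (Finset.mem_Ico.mp hm).1
  rw [h1]
  rw [h4] at h2
  linear_combination h2 - h3

lemma pderiv_smul_c (c : ℂ) (x : F) :
    MvPolynomial.pderiv (2 : Fin 4) (c • x) = c • MvPolynomial.pderiv (2 : Fin 4) x :=
  (MvPolynomial.pderiv (2 : Fin 4)).toLinearMap.map_smul_of_tower c x

/-- The summand appearing in the right-hand side. -/
noncomputable def Gfun (P : Fin 5 → Fin 5 → ℤ → F) (p₁ p₂ : Fin 5) (b₁ b₂ : ℕ) (m : ℕ) : F :=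
  ((1 / 5 : ℂ) * (-1 : ℂ) ^ (b₁ + b₂) * (-1 : ℂ) ^ m *
      ζ ^ (-(((b₁ : ℤ) + (m : ℤ) + 2) * ((p₁ : ℕ) : ℤ))
          - ((b₂ : ℤ) - (m : ℤ) + 4) * ((p₂ : ℕ) : ℤ))) •
    (Lvinv ^ 2 *
      (P 4 p₁ ((b₁ : ℤ) + (m : ℤ) - 2) * P 4 p₂ ((b₂ : ℤ) - (m : ℤ))))

set_option maxHeartbeats 2000000 in
/-- `∂E/∂A₁″ = (1/5)·L⁻²·(−1)^{b₁+b₂}·Σ_{m=0}^{2} (−1)^m·ζ^{−(b₁+m+2)p₁ − (b₂−m+4)p₂}·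
P_{4,p₁}^{b₁+m−2}·P_{4,p₂}^{b₂−m}`. -/
theorem stmt13
    (D : Derivation ℂ F F)
    (hDL : D Lv = Lv - (5 ^ 5 : ℂ)⁻¹ • Lv ^ 6)
    (hDA1 : D A1 = A1')
    (hDA1' : D A1' = A1'')
    (hDA2 : D A2 = Lv * A1 ^ 2 + Lv * A2 ^ 2 - A1'
      - 15 * (1 - (5 ^ 5 : ℂ)⁻¹ • Lv ^ 5) * ((5 ^ 5 : ℂ)⁻¹ • Lv ^ 5))
    (q : Fin 5 → ℤ → LaurentPolynomial ℂ)
    (hq : ∀ (j : Fin 5) (k : ℤ), k < 0 → q j k = 0)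
    (P : Fin 5 → Fin 5 → ℤ → F)
    (hPneg : ∀ (i j : Fin 5) (k : ℤ), k < 0 → P i j k = 0)
    (hP0 : ∀ (j : Fin 5) (k : ℤ), P 0 j k = MvPolynomial.C (q j k))
    (hP4 : ∀ (j : Fin 5) (k : ℤ),
      P 4 j k = P 0 j k + Lvinv * D (P 0 j (k - 1)))
    (hP3 : ∀ (j : Fin 5) (k : ℤ),
      P 3 j k = P 4 j k + Lvinv * D (P 4 j (k - 1)) + A1 * P 4 j (k - 1))
    (hP2 : ∀ (j : Fin 5) (k : ℤ),
      P 2 j k = P 3 j k + Lvinv * D (P 3 j (k - 1)) + A2 * P 3 j (k - 1))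
    (hP1 : ∀ (j : Fin 5) (k : ℤ),
      P 1 j k = P 2 j k + Lvinv * D (P 2 j (k - 1)) - A2 * P 2 j (k - 1))
    (p₁ p₂ : Fin 5) (b₁ b₂ : ℕ) :
    (MvPolynomial.pderiv (2 : Fin 4)) (edgeE P p₁ p₂ b₁ b₂)
      = ∑ m ∈ Finset.range 3,
          ((1 / 5 : ℂ) * (-1 : ℂ) ^ (b₁ + b₂) * (-1 : ℂ) ^ m *
              ζ ^ (-(((b₁ : ℤ) + (m : ℤ) + 2) * ((p₁ : ℕ) : ℤ))
                  - ((b₂ : ℤ) - (m : ℤ) + 4) * ((p₂ : ℕ) : ℤ))) •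
            (Lvinv ^ 2 *
              (P 4 p₁ ((b₁ : ℤ) + (m : ℤ) - 2) * P 4 p₂ ((b₂ : ℤ) - (m : ℤ)))) := by
  classical
  have hDc : ∀ {x : F}, IsConstF x → IsConstF (D x) := fun {x} => isConstF_D D hDL
  have pd_const : ∀ {x : F}, IsConstF x → MvPolynomial.pderiv (2 : Fin 4) x = 0 := by
    rintro x ⟨g, rfl⟩; simp
  have hC0 : ∀ j k, IsConstF (P 0 j k) := fun j k => (hP0 j k) ▸ isConstF_C _
  have hC4 : ∀ j k, IsConstF (P 4 j k) := fun j k => (hP4 j k) ▸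
    ((hC0 j k).add ((isConstF_C _).mul (hDc (hC0 j (k - 1)))))
  have pdA1 : MvPolynomial.pderiv (2 : Fin 4) A1 = 0 := by simp [A1]
  have pdA1' : MvPolynomial.pderiv (2 : Fin 4) A1' = 0 := by simp [A1']
  have pdA1'' : MvPolynomial.pderiv (2 : Fin 4) A1'' = 1 := by simp [A1'']
  have pdA2 : MvPolynomial.pderiv (2 : Fin 4) A2 = 0 := by simp [A2]
  have pdLvinv : MvPolynomial.pderiv (2 : Fin 4) Lvinv = 0 := pd_const ⟨_, rfl⟩
  have pdLv : MvPolynomial.pderiv (2 : Fin 4) Lv = 0 := pd_const ⟨_, rfl⟩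
  have cLvinv : IsConstF Lvinv := ⟨_, rfl⟩
  have pd15 : MvPolynomial.pderiv (2 : Fin 4) (15 : F) = 0 :=
    pd_const ⟨15, (map_ofNat MvPolynomial.C 15).symm⟩
  have pdDLvinv : MvPolynomial.pderiv (2 : Fin 4) (D Lvinv) = 0 := pd_const (hDc cLvinv)
  have pdDDLvinv : MvPolynomial.pderiv (2 : Fin 4) (D (D Lvinv)) = 0 :=
    pd_const (hDc (hDc cLvinv))
  have hpdDA2 : MvPolynomial.pderiv (2 : Fin 4) (D A2) = 0 := by
    rw [hDA2]
    simp [pderiv_mul, pderiv_smul_c, pdA1, pdA2, pdA1', pdLv, pd15]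
  have hpd0 : ∀ j k, MvPolynomial.pderiv (2 : Fin 4) (P 0 j k) = 0 :=
    fun j k => pd_const (hC0 j k)
  have hpd4 : ∀ j k, MvPolynomial.pderiv (2 : Fin 4) (P 4 j k) = 0 :=
    fun j k => pd_const (hC4 j k)
  have hpd3 : ∀ j k, MvPolynomial.pderiv (2 : Fin 4) (P 3 j k) = 0 := by
    intro j k
    rw [hP3 j k]
    simp [pderiv_mul, pdA1, pdLvinv, pd_const (hC4 j k), pd_const (hC4 j (k-1)),
      pd_const (hDc (hC4 j (k-1)))]
  have hpdD3 : ∀ j k, MvPolynomial.pderiv (2 : Fin 4) (D (P 3 j k)) = 0 := by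
    intro j k
    rw [hP3 j k]
    simp only [map_add, Derivation.leibniz, smul_eq_mul, hDA1]
    simp [pderiv_mul, pdA1, pdA1', pdLvinv, pd_const (hDc (hC4 j k)),
      pd_const (hDc (hC4 j (k-1))), pd_const (hDc (hDc (hC4 j (k-1)))),
      pd_const (hC4 j (k-1)), pdDLvinv]
  have hpdDD3 : ∀ j k, MvPolynomial.pderiv (2 : Fin 4) (D (D (P 3 j k))) = P 4 j (k - 1) := by
    intro j k
    rw [hP3 j k]
    simp only [map_add, Derivation.leibniz, smul_eq_mul, hDA1, hDA1']
    simp [pderiv_mul, pdA1, pdA1', pdA1'', pdLvinv, pd_const (hDc (hDc (hC4 j k))),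
      pd_const (hDc (hDc (hDc (hC4 j (k-1))))), pd_const (hDc (hDc (hC4 j (k-1)))),
      pd_const (hDc (hC4 j (k-1))), pd_const (hC4 j (k-1)), pdDLvinv, pdDDLvinv]
  have hpd2 : ∀ j k, MvPolynomial.pderiv (2 : Fin 4) (P 2 j k) = 0 := by
    intro j k
    rw [hP2 j k]
    simp [pderiv_mul, pdA2, pdLvinv, hpd3, hpdD3]
  have hpdD2 : ∀ j k, MvPolynomial.pderiv (2 : Fin 4) (D (P 2 j k)) = Lvinv * P 4 j (k - 2) := by
    intro j k
    rw [hP2 j k]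
    simp only [map_add, Derivation.leibniz, smul_eq_mul]
    simp [pderiv_mul, pdA2, pdLvinv, hpd3, hpdD3, hpdDD3, hpdDA2, pdDLvinv,
      show k - 1 - 1 = k - 2 from by ring]
  have hpd1 : ∀ j k, MvPolynomial.pderiv (2 : Fin 4) (P 1 j k)
      = Lvinv ^ 2 * P 4 j (k - 3) := by
    intro j k
    rw [hP1 j k]
    simp [pderiv_mul, pdA2, pdLvinv, hpd2, hpdD2, show k - 1 - 2 = k - 3 from by ring,
      pow_two, mul_assoc]
  -- the right-hand side as a sum of `Gfun`
  have hGzero : ∀ m, b₂ + 1 ≤ m → Gfun P p₁ p₂ b₁ b₂ m = 0 := by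
    intro m hm
    have hneg : ((b₂ : ℤ) - (m : ℤ)) < 0 := by omega
    simp [Gfun, hPneg 4 p₂ _ hneg]
  have key : ∀ m ∈ Finset.range (b₂ + 1),
      MvPolynomial.pderiv (2 : Fin 4) (∑ r : Fin 5,
        ((1 / 5 : ℂ) * (-1 : ℂ) ^ (b₁ + b₂) * (-1 : ℂ) ^ m *
            ζ ^ (-(((b₁ : ℤ) + (m : ℤ) + 1 + ((InvFive r : ℕ) : ℤ)) * ((p₁ : ℕ) : ℤ))
                - ((b₂ : ℤ) - (m : ℤ) + ((r : ℕ) : ℤ)) * ((p₂ : ℕ) : ℤ))) •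
          (P (InvFive r) p₁ ((b₁ : ℤ) + (m : ℤ) + 1) * P r p₂ ((b₂ : ℤ) - (m : ℤ))))
      = Gfun P p₁ p₂ b₁ b₂ m - Gfun P p₁ p₂ b₁ b₂ (m + 3) := by
    intro m _
    rw [map_sum, Fin.sum_univ_five]
    have i0 : InvFive 0 = 0 := by decide
    have i1 : InvFive 1 = 4 := by decide
    have i2 : InvFive 2 = 3 := by decide
    have i3 : InvFive 3 = 2 := by decide
    have i4 : InvFive 4 = 1 := by decide
    simp only [i0, i1, i2, i3, i4, pderiv_smul_c, pderiv_mul, hpd0, hpd1, hpd2, hpd3, hpd4,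
      zero_mul, mul_zero, add_zero, zero_add, smul_zero]
    have v1 : (((1 : Fin 5) : ℕ) : ℤ) = 1 := rfl
    have v4 : (((4 : Fin 5) : ℕ) : ℤ) = 4 := rfl
    simp only [v1, v4, Gfun]
    rw [show (-(((b₁ : ℤ) + ((m + 3 : ℕ) : ℤ) + 2) * ((p₁ : ℕ) : ℤ))
            - ((b₂ : ℤ) - ((m + 3 : ℕ) : ℤ) + 4) * ((p₂ : ℕ) : ℤ))
          = (-(((b₁ : ℤ) + (m : ℤ) + 1 + 4) * ((p₁ : ℕ) : ℤ))
            - ((b₂ : ℤ) - (m : ℤ) + 1) * ((p₂ : ℕ) : ℤ)) from by push_cast; ring,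
      show ((-1 : ℂ)) ^ (m + 3) = -((-1 : ℂ)) ^ m from by rw [pow_add]; ring,
      show (b₁ : ℤ) + (m : ℤ) + 1 - 3 = (b₁ : ℤ) + (m : ℤ) - 2 from by ring,
      show (b₁ : ℤ) + ((m + 3 : ℕ) : ℤ) - 2 = (b₁ : ℤ) + (m : ℤ) + 1 from by push_cast; ring,
      show (b₂ : ℤ) - ((m + 3 : ℕ) : ℤ) = (b₂ : ℤ) - (m : ℤ) - 3 from by push_cast; ring,
      show (-(((b₁ : ℤ) + (m : ℤ) + 1 + 1) * ((p₁ : ℕ) : ℤ))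
            - ((b₂ : ℤ) - (m : ℤ) + 4) * ((p₂ : ℕ) : ℤ))
          = (-(((b₁ : ℤ) + (m : ℤ) + 2) * ((p₁ : ℕ) : ℤ))
            - ((b₂ : ℤ) - (m : ℤ) + 4) * ((p₂ : ℕ) : ℤ)) from by ring,
      show P 4 p₁ ((b₁ : ℤ) + (m : ℤ) + 1) * (Lvinv ^ 2 * P 4 p₂ ((b₂ : ℤ) - (m : ℤ) - 3))
          = Lvinv ^ 2 * (P 4 p₁ ((b₁ : ℤ) + (m : ℤ) + 1) * P 4 p₂ ((b₂ : ℤ) - (m : ℤ) - 3))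
        from by ring,
      show Lvinv ^ 2 * P 4 p₁ ((b₁ : ℤ) + (m : ℤ) - 2) * P 4 p₂ ((b₂ : ℤ) - (m : ℤ))
          = Lvinv ^ 2 * (P 4 p₁ ((b₁ : ℤ) + (m : ℤ) - 2) * P 4 p₂ ((b₂ : ℤ) - (m : ℤ)))
        from mul_assoc _ _ _]
    match_scalars <;> ring
  rw [show (∑ m ∈ Finset.range 3,
        ((1 / 5 : ℂ) * (-1 : ℂ) ^ (b₁ + b₂) * (-1 : ℂ) ^ m *
            ζ ^ (-(((b₁ : ℤ) + (m : ℤ) + 2) * ((p₁ : ℕ) : ℤ))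
                - ((b₂ : ℤ) - (m : ℤ) + 4) * ((p₂ : ℕ) : ℤ))) •
          (Lvinv ^ 2 *
            (P 4 p₁ ((b₁ : ℤ) + (m : ℤ) - 2) * P 4 p₂ ((b₂ : ℤ) - (m : ℤ)))))
      = ∑ m ∈ Finset.range 3, Gfun P p₁ p₂ b₁ b₂ m from
    Finset.sum_congr rfl fun m _ => rfl]
  rw [edgeE, map_sum, Finset.sum_congr rfl key]
  exact telescope3 _ _ hGzero
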